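/- arXiv:2212.05353 — 8 statements merged into one kernel-verified Lean document; each statement's English description precedes it below -/
import Mathlib

section
/- Let C be a cap in (Z/2Z)^n and p an element of its exclude set. If {x1,y1,z1} and {x2,y2,z2} are two distinct 3-element subsets of C with x1+y1+z1 = p = x2+y2+z2, then the two triples are disjoint. -/
/-!
If the two triples share a point `x`, removing it leaves two pairs in `C` with the same sum.
Two such pairs that share a point are equal by cancellation, while two disjoint ones `{u, v}`,
`{w, z}` would give four distinct points with `u + v + w + z = 2 (u + v) = 0`, a quad in `C`.
Hence the pairs coincide, and so do the triples.
-/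

def IsCap {n : ℕ} (S : Set (Fin n → ZMod 2)) : Prop :=
  ∀ a ∈ S, ∀ b ∈ S, ∀ c ∈ S, ∀ d ∈ S,
    a ≠ b → a ≠ c → a ≠ d → b ≠ c → b ≠ d → c ≠ d → a + b + c + d ≠ 0

namespace Finset

variable {G : Type*}

theorem sum_erase_eq_of_sum_eq [DecidableEq G] [AddCancelCommMonoid G] {s t : Finset G} {x : G}
    (hs : x ∈ s) (ht : x ∈ t) (h : s.sum id = t.sum id) :
    (s.erase x).sum id = (t.erase x).sum id :=
  add_left_cancel (a := x) <| (add_sum_erase s id hs).trans (h.trans (add_sum_erase t id ht).symm)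

theorem eq_of_card_eq_one_of_sum_eq [AddCommMonoid G] {s t : Finset G}
    (hs : s.card = 1) (ht : t.card = 1) (h : s.sum id = t.sum id) : s = t := by
  obtain ⟨a, rfl⟩ := card_eq_one.mp hs
  obtain ⟨b, rfl⟩ := card_eq_one.mp ht
  simpa using h

theorem eq_of_card_eq_two_of_sum_eq_of_not_disjoint [DecidableEq G] [AddCancelCommMonoid G]
    {s t : Finset G} (hs : s.card = 2) (ht : t.card = 2) (h : s.sum id = t.sum id)
    (hst : ¬Disjoint s t) : s = t := by
  obtain ⟨x, hxs, hxt⟩ := not_disjoint_iff.mp hst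
  refine erase_injOn' x hxs hxt
    (eq_of_card_eq_one_of_sum_eq ?_ ?_ (sum_erase_eq_of_sum_eq hxs hxt h))
  · rw [card_erase_of_mem hxs, hs]
  · rw [card_erase_of_mem hxt, ht]

end Finset

open Finset

theorem IsCap.eq_of_card_eq_two_of_sum_eq {n : ℕ} {C : Finset (Fin n → ZMod 2)}
    (hC : IsCap (C : Set (Fin n → ZMod 2))) {s t : Finset (Fin n → ZMod 2)}
    (hsC : s ⊆ C) (htC : t ⊆ C) (hs : s.card = 2) (ht : t.card = 2) (h : s.sum id = t.sum id) :
    s = t := by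
  by_contra hne
  have hst : Disjoint s t := by
    by_contra hst
    exact hne (eq_of_card_eq_two_of_sum_eq_of_not_disjoint hs ht h hst)
  obtain ⟨u, v, huv, rfl⟩ := card_eq_two.mp hs
  obtain ⟨w, z, hwz, rfl⟩ := card_eq_two.mp ht
  simp only [disjoint_insert_left, disjoint_singleton_left, mem_insert, mem_singleton,
    not_or] at hst
  obtain ⟨⟨huw, huz⟩, hvw, hvz⟩ := hst
  rw [sum_pair huv, sum_pair hwz] at h
  refine hC u (hsC (by simp)) v (hsC (by simp)) w (htC (by simp)) z (htC (by simp))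
    huv huw huz hvw hvz hwz ?_
  simp only [id] at h
  rw [add_assoc, ← h, ZModModule.add_self]

/-- In a cap `C`, two distinct 3-element subsets with the same sum `p`
(a point of the exclude set) must be disjoint. -/
theorem disjoint_triples {n : ℕ} (C : Finset (Fin n → ZMod 2)) (hC : IsCap (C : Set (Fin n → ZMod 2)))
    (p : Fin n → ZMod 2) (t₁ t₂ : Finset (Fin n → ZMod 2))
    (ht₁ : t₁ ⊆ C) (ht₂ : t₂ ⊆ C) (hc₁ : t₁.card = 3) (hc₂ : t₂.card = 3)
    (hne : t₁ ≠ t₂) (hs₁ : t₁.sum id = p) (hs₂ : t₂.sum id = p) :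
    Disjoint t₁ t₂ := by
  by_contra hmeet
  obtain ⟨x, hx₁, hx₂⟩ := not_disjoint_iff.mp hmeet
  have hpairs : t₁.erase x = t₂.erase x :=
    hC.eq_of_card_eq_two_of_sum_eq ((erase_subset x t₁).trans ht₁)
      ((erase_subset x t₂).trans ht₂)
      (by rw [card_erase_of_mem hx₁, hc₁]) (by rw [card_erase_of_mem hx₂, hc₂])
      (sum_erase_eq_of_sum_eq hx₁ hx₂ (hs₁.trans hs₂.symm))
  exact hne (erase_injOn' x hx₁ hx₂ hpairs)
end

section
/- Let C be a k-element cap in (Z/2Z)^n. If some point p can be written as the sum of a 3-element subset of C in at least m distinct ways, then k ≥ 3m. -/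
open Finset

lemma Finset.mul_card_le_card_of_pairwiseDisjoint {α : Type*} [DecidableEq α]
    {s : Finset α} {F : Finset (Finset α)} {k : ℕ} (hF : F ⊆ s.powersetCard k)
    (hdisj : (F : Set (Finset α)).PairwiseDisjoint id) : k * #F ≤ #s := by
  have hmem : ∀ t ∈ F, t ⊆ s ∧ #t = k := fun t ht => mem_powersetCard.1 (hF ht)
  calc k * #F = ∑ t ∈ F, #t := by
        rw [sum_congr rfl fun t ht => (hmem t ht).2, sum_const, smul_eq_mul, mul_comm]
    _ = #(F.biUnion id) := (card_biUnion hdisj).symm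
    _ ≤ #s := card_le_card <| biUnion_subset.2 fun t ht => (hmem t ht).1

namespace IsCap

variable {n : ℕ} {C : Set (Fin n → ZMod 2)}

lemma add_ne_add (hC : IsCap C) {a b c d : Fin n → ZMod 2}
    (ha : a ∈ C) (hb : b ∈ C) (hc : c ∈ C) (hd : d ∈ C) (hab : a ≠ b) (hac : a ≠ c)
    (had : a ≠ d) (hbc : b ≠ c) (hbd : b ≠ d) (hcd : c ≠ d) : a + b ≠ c + d := by
  intro h
  refine hC a ha b hb c hc d hd hab hac had hbc hbd hcd ?_
  rw [add_assoc _ c, h]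
  exact funext fun i => CharTwo.add_self_eq_zero (c i + d i)

lemma sum_ne_sum_of_disjoint (hC : IsCap C)
    {u v : Finset (Fin n → ZMod 2)} (hu : ↑u ⊆ C) (hv : ↑v ⊆ C) (huv : Disjoint u v)
    (hcard : #u = #v) (hpos : 0 < #u) (hle : #u ≤ 2) : ∑ x ∈ u, x ≠ ∑ x ∈ v, x := by
  obtain hone | htwo : #u = 1 ∨ #u = 2 := by omega
  · obtain ⟨a, rfl⟩ := card_eq_one.1 hone
    obtain ⟨b, rfl⟩ := card_eq_one.1 (hcard ▸ hone)
    simpa using huv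
  · obtain ⟨a, b, hab, rfl⟩ := card_eq_two.1 htwo
    obtain ⟨c, d, hcd, rfl⟩ := card_eq_two.1 (hcard ▸ htwo)
    simp only [disjoint_insert_left, disjoint_insert_right, disjoint_singleton,
      mem_insert, mem_singleton, not_or] at huv
    simp only [coe_insert, coe_singleton, Set.insert_subset_iff,
      Set.singleton_subset_iff] at hu hv
    rw [sum_pair hab, sum_pair hcd]
    exact hC.add_ne_add hu.1 hu.2 hv.1 hv.2 hab (Ne.symm huv.1.1) huv.2.1
      (Ne.symm huv.1.2) huv.2.2 hcd

lemma disjoint_of_sum_eq (hC : IsCap C)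
    {s t : Finset (Fin n → ZMod 2)} (hs : ↑s ⊆ C) (ht : ↑t ⊆ C) (hs3 : #s = 3) (ht3 : #t = 3)
    (hst : ∑ x ∈ s, x = ∑ x ∈ t, x) (hne : s ≠ t) : Disjoint s t := by
  by_contra hmeet
  have hcard : #(s \ t) = #(t \ s) := card_sdiff_comm (hs3.trans ht3.symm)
  have hpos : 0 < #(s \ t) := by
    refine card_pos.2 (nonempty_iff_ne_empty.2 fun hempty => hne ?_)
    exact eq_of_subset_of_card_le (sdiff_eq_empty_iff_subset.1 hempty) (by omega)
  have hle : #(s \ t) ≤ 2 := by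
    have hinter : 0 < #(s ∩ t) := card_pos.2 (not_disjoint_iff_nonempty_inter.1 hmeet)
    have := card_inter_add_card_sdiff s t
    omega
  refine hC.sum_ne_sum_of_disjoint ?_ ?_ disjoint_sdiff_sdiff hcard hpos hle
    (sum_sdiff_eq_sum_sdiff_iff.2 hst)
  · exact (coe_subset.2 sdiff_subset).trans hs
  · exact (coe_subset.2 sdiff_subset).trans ht

end IsCap

/-- If a point `p` can be written as the sum of a 3-element subset of a cap `C`
in at least `m` distinct ways, then `C` has at least `3 * m` elements. -/
theorem card_ge_of_mult {n : ℕ} (C : Finset (Fin n → ZMod 2))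
    (hC : IsCap (C : Set (Fin n → ZMod 2))) (p : Fin n → ZMod 2) (m : ℕ)
    (hm : m ≤ ((C.powersetCard 3).filter (fun t => t.sum id = p)).card) :
    3 * m ≤ C.card := by
  set F := (C.powersetCard 3).filter (fun t => t.sum id = p)
  have hdisj : (F : Set (Finset (Fin n → ZMod 2))).PairwiseDisjoint id := by
    intro s hs t ht hne
    simp only [F, coe_filter, mem_powersetCard, Set.mem_ofPred_eq] at hs ht
    exact hC.disjoint_of_sum_eq (coe_subset.2 hs.1.1) (coe_subset.2 ht.1.1) hs.1.2 ht.1.2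
      (hs.2.trans ht.2.symm) hne
  calc 3 * m ≤ 3 * #F := Nat.mul_le_mul_left 3 hm
    _ ≤ #C := mul_card_le_card_of_pairwiseDisjoint (filter_subset _ _) hdisj
end

section
/- Every cap in (Z/2Z)^n with at most 5 elements is affinely independent. -/
/-!
Over `ZMod 2` the only weights are `0` and `1`, so an affine dependence among the points of `C`
is the same as a nonempty subset of even size summing to zero. With at most five points such a
subset has two or four elements: two distinct points never sum to zero, and four distinct points
summing to zero are exactly what a cap excludes.
-/

open Finset

section ZModTwo

variable {ι V : Type*} [AddCommGroup V] [Module (ZMod 2) V]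

theorem affineIndependent_zmod_two_iff {p : ι → V} :
    AffineIndependent (ZMod 2) p ↔ ∀ t : Finset ι, Even #t → ∑ i ∈ t, p i = 0 → t = ∅ := by
  classical
  rw [affineIndependent_iff]
  constructor
  · intro hp t heven hsum
    by_contra hne
    obtain ⟨i, hi⟩ := nonempty_iff_ne_empty.mpr hne
    have hw : ∑ _i ∈ t, (1 : ZMod 2) = 0 := by
      simpa using (ZMod.natCast_eq_zero_iff_even).mpr heven
    exact one_ne_zero (hp t (fun _ => 1) hw (by simpa using hsum) i hi)
  · intro hp s w hw hwp i hi
    -- `ZMod 2` is `Fin 2` by definition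
    have hw_one : ∀ j, w j ≠ 0 → w j = 1 := fun j => Fin.eq_one_of_ne_zero (w j)
    set t := s.filter (w · ≠ 0)
    have hsum : ∑ j ∈ t, p j = 0 :=
      calc ∑ j ∈ t, p j = ∑ j ∈ t, w j • p j :=
            sum_congr rfl fun j hj => by rw [hw_one j (mem_filter.mp hj).2, one_smul]
        _ = ∑ j ∈ s, w j • p j := sum_filter_of_ne fun j _ h h0 => h (by rw [h0, zero_smul])
        _ = 0 := hwp
    have heven : Even #t := by
      rw [← ZMod.natCast_eq_zero_iff_even, ← hw]
      calc (#t : ZMod 2) = ∑ j ∈ t, w j := by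
            rw [card_eq_sum_ones, Nat.cast_sum, Nat.cast_one]
            exact sum_congr rfl fun j hj => (hw_one j (mem_filter.mp hj).2).symm
        _ = ∑ j ∈ s, w j := sum_filter_ne_zero s
    by_contra hwi
    have hit : i ∈ t := mem_filter.mpr ⟨hi, hwi⟩
    simp [hp t heven hsum] at hit

theorem sum_ne_zero_of_card_eq_two {t : Finset V} (ht : #t = 2) : ∑ x ∈ t, x ≠ 0 := by
  classical
  obtain ⟨a, b, hab, rfl⟩ := card_eq_two.mp ht
  rw [sum_pair hab, Ne, add_eq_zero_iff_eq_neg, ZModModule.neg_eq_self]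
  exact hab

end ZModTwo

theorem IsCap.sum_ne_zero_of_card_eq_four {n : ℕ} {S : Set (Fin n → ZMod 2)} (hS : IsCap S)
    {t : Finset (Fin n → ZMod 2)} (htS : ↑t ⊆ S) (ht : #t = 4) : ∑ x ∈ t, x ≠ 0 := by
  obtain ⟨a, b, c, d, hab, hac, had, hbc, hbd, hcd, rfl⟩ := card_eq_four.mp ht
  simp only [coe_insert, coe_singleton, Set.insert_subset_iff, Set.singleton_subset_iff] at htS
  obtain ⟨ha, hb, hc, hd⟩ := htS
  rw [sum_insert (by simp [hab, hac, had]), sum_insert (by simp [hbc, hbd]), sum_pair hcd,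
    ← add_assoc, ← add_assoc]
  exact hS a ha b hb c hc d hd hab hac had hbc hbd hcd

theorem IsCap.eq_empty_of_even_card_of_sum_eq_zero {n : ℕ} {S : Set (Fin n → ZMod 2)}
    (hS : IsCap S) {t : Finset (Fin n → ZMod 2)} (htS : ↑t ⊆ S) (ht : #t ≤ 5)
    (heven : Even #t) (hsum : ∑ x ∈ t, x = 0) : t = ∅ := by
  obtain ⟨k, hk⟩ := heven
  obtain h0 | h2 | h4 : #t = 0 ∨ #t = 2 ∨ #t = 4 := by omega
  · exact card_eq_zero.mp h0
  · exact absurd hsum (sum_ne_zero_of_card_eq_two h2)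
  · exact absurd hsum (hS.sum_ne_zero_of_card_eq_four htS h4)

/-- Every cap in `(ZMod 2)^n` with at most 5 elements is affinely independent. -/
theorem cap_card_le_five_affineIndependent {n : ℕ} (C : Finset (Fin n → ZMod 2))
    (hC : IsCap (C : Set (Fin n → ZMod 2))) (hcard : C.card ≤ 5) :
    AffineIndependent (ZMod 2)
      (fun x : ↥(C : Set (Fin n → ZMod 2)) => (x : Fin n → ZMod 2)) := by
  refine affineIndependent_zmod_two_iff.mpr fun t heven hsum => ?_
  let u := t.map (Function.Embedding.subtype _)
  have huC : ↑u ⊆ (C : Set (Fin n → ZMod 2)) := by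
    intro x hx
    obtain ⟨y, -, rfl⟩ := mem_map.mp hx
    exact y.2
  have hu : u = ∅ :=
    hC.eq_empty_of_even_card_of_sum_eq_zero huC
      ((card_le_card (coe_subset.mp huC)).trans hcard) (by simpa [u] using heven)
      (by simpa [u] using hsum)
  simpa [u] using hu
end

section
/- Let C be a 5-element cap in (Z/2Z)^n and y the sum of all five elements of C. Then the affine span of C equals the disjoint union qc(C) ∪ {y}, qc(C) has exactly 15 elements, and the affine span of C is a 4-dimensional affine subspace (has 16 elements). -/
def excl {n : ℕ} (S : Finset (Fin n → ZMod 2)) : Finset (Fin n → ZMod 2) :=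
  (S.powersetCard 3).image (fun t => t.sum id)

open Finset

theorem ZMod.eq_zero_or_eq_one_of_two (z : ZMod 2) : z = 0 ∨ z = 1 := by
  revert z
  decide

theorem Finset.sum_smul_eq_sum_filter_eq_one {ι M : Type*} [AddCommMonoid M]
    [Module (ZMod 2) M] (s : Finset ι) (w : ι → ZMod 2) (f : ι → M) :
    ∑ i ∈ s, w i • f i = ∑ i ∈ s with w i = 1, f i := by
  rw [sum_filter]
  refine sum_congr rfl fun i _ => ?_
  rcases (w i).eq_zero_or_eq_one_of_two with h | h <;> simp [h]

theorem Finset.sum_eq_card_filter_eq_one {ι : Type*} (s : Finset ι) (w : ι → ZMod 2) :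
    ∑ i ∈ s, w i = #{i ∈ s | w i = 1} := by
  simpa using s.sum_smul_eq_sum_filter_eq_one w fun _ => (1 : ZMod 2)

theorem Finset.affineIndependent_iff_sum_smul_eq_zero {k V : Type*} [Ring k] [AddCommGroup V]
    [Module k V] (s : Finset V) :
    AffineIndependent k ((↑) : s → V) ↔
      ∀ w : V → k, ∑ x ∈ s, w x = 0 → ∑ x ∈ s, w x • x = 0 → ∀ x ∈ s, w x = 0 := by
  classical
  rw [affineIndependent_iff_of_fintype]
  constructor
  · intro h w hw hsum x hx
    refine h (fun i => w i) ?_ ?_ ⟨x, hx⟩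
    · rwa [sum_coe_sort s w]
    · rw [weightedVSub_eq_linear_combination _ (by rwa [sum_coe_sort s w])]
      rwa [sum_coe_sort s fun x => w x • x]
  · intro h w hw hsum i
    have key := h (fun x => if hx : x ∈ s then w ⟨x, hx⟩ else 0) ?_ ?_ i i.2
    · simpa using key
    · rw [← sum_coe_sort]; simpa using hw
    · rw [weightedVSub_eq_linear_combination _ hw] at hsum
      rw [← sum_coe_sort]; simpa using hsum

section
variable {V : Type*} [AddCommGroup V] [Module (ZMod 2) V]

theorem coe_affineSpan_eq_image_sum_filter_odd [DecidableEq V] (s : Finset V) :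
    (affineSpan (ZMod 2) (s : Set V) : Set V) =
      ({t ∈ s.powerset | Odd #t}.image fun t => t.sum id : Finset V) := by
  ext v
  simp only [SetLike.mem_coe, coe_image, Set.mem_image, mem_filter, mem_powerset]
  constructor
  · intro hv
    rw [← Set.image_id (s : Set V)] at hv
    obtain ⟨u, w, hus, hw, rfl⟩ := eq_affineCombination_of_mem_affineSpan_image hv
    refine ⟨{x ∈ u | w x = 1}, ⟨(filter_subset _ _).trans hus, ?_⟩, ?_⟩
    · rw [← ZMod.natCast_eq_one_iff_odd, ← sum_eq_card_filter_eq_one, hw]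
    · rw [affineCombination_eq_linear_combination _ _ _ hw, sum_smul_eq_sum_filter_eq_one]
  · rintro ⟨t, ⟨hts, hodd⟩, rfl⟩
    have hw : ∑ x ∈ t, (1 : V → ZMod 2) x = 1 := by
      simpa using ZMod.natCast_eq_one_iff_odd.mpr hodd
    have hmem := affineCombination_mem_affineSpan_image hw (s' := s)
      (fun x hx hxs => absurd (hts hx) hxs) id
    rw [affineCombination_eq_linear_combination _ _ _ hw, Set.image_id] at hmem
    simpa using hmem

theorem AffineIndependent.injOn_sum {s : Finset V}
    (hs : AffineIndependent (ZMod 2) ((↑) : s → V)) :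
    Set.InjOn (fun t => t.sum id) {t | t ⊆ s ∧ Odd #t} := by
  classical
  rintro t ⟨hts, ht⟩ t' ⟨hts', ht'⟩ hsum
  -- the difference of the indicator weights of `t` and `t'` is an affine dependency of `s`
  have key := (s.affineIndependent_iff_sum_smul_eq_zero.mp hs)
    (fun x => (if x ∈ t then 1 else 0) - if x ∈ t' then 1 else 0) ?_ ?_
  · ext x
    by_cases hx : x ∈ s
    · have := key x hx
      by_cases h1 : x ∈ t <;> by_cases h2 : x ∈ t' <;> simp_all
    · exact iff_of_false (fun h => hx (hts h)) (fun h => hx (hts' h))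
  · simp only [sum_sub_distrib, sum_boole, filter_mem_eq_inter, inter_eq_right.mpr hts,
      inter_eq_right.mpr hts', ZMod.natCast_eq_one_iff_odd.mpr ht,
      ZMod.natCast_eq_one_iff_odd.mpr ht', sub_self]
  · simp only [sub_smul, ite_smul, one_smul, zero_smul, sum_sub_distrib, sum_ite_mem,
      inter_eq_right.mpr hts, inter_eq_right.mpr hts']
    exact sub_eq_zero.mpr hsum

theorem affineIndependent_of_forall_even_sum_eq_zero {s : Finset V}
    (h : ∀ t ⊆ s, Even #t → t.sum id = 0 → t = ∅) :
    AffineIndependent (ZMod 2) ((↑) : s → V) := by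
  classical
  rw [s.affineIndependent_iff_sum_smul_eq_zero]
  intro w hw hsum x hx
  have hempty := h {y ∈ s | w y = 1} (filter_subset _ _)
    (by rw [← ZMod.natCast_eq_zero_iff_even, ← sum_eq_card_filter_eq_one, hw])
    (by rw [← hsum, sum_smul_eq_sum_filter_eq_one]; rfl)
  exact (w x).eq_zero_or_eq_one_of_two.resolve_right (filter_eq_empty_iff.mp hempty hx)

end

theorem Finset.filter_odd_card_powerset_of_card_eq_five {α : Type*} [DecidableEq α]
    {s : Finset α} (hs : #s = 5) :
    {t ∈ s.powerset | Odd #t} = insert s (powersetCard 1 s ∪ powersetCard 3 s) := by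
  ext t
  simp only [mem_filter, mem_powerset, mem_insert, mem_union, mem_powersetCard]
  constructor
  · rintro ⟨hts, k, hk⟩
    have := card_le_card hts
    obtain h | h | h : #t = 1 ∨ #t = 3 ∨ #t = 5 := by omega
    · exact .inr (.inl ⟨hts, h⟩)
    · exact .inr (.inr ⟨hts, h⟩)
    · exact .inl (eq_of_subset_of_card_le hts (by omega))
  · rintro (rfl | ⟨hts, h⟩ | ⟨hts, h⟩)
    · exact ⟨subset_rfl, by rw [hs]; decide⟩
    all_goals exact ⟨hts, by rw [h]; decide⟩

variable {n : ℕ}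

theorem union_excl_eq_image (s : Finset (Fin n → ZMod 2)) :
    s ∪ excl s = (powersetCard 1 s ∪ powersetCard 3 s).image fun t => t.sum id := by
  rw [image_union, excl, powersetCard_one, map_eq_image, image_image]
  simp [Function.comp_def]

theorem IsCap.eq_empty_of_even_of_sum_eq_zero {s t : Finset (Fin n → ZMod 2)}
    (hC : IsCap (s : Set (Fin n → ZMod 2))) (hs : #s ≤ 5) (hts : t ⊆ s) (he : Even #t)
    (hsum : t.sum id = 0) : t = ∅ := by
  have := card_le_card hts
  obtain ⟨k, hk⟩ := he
  obtain h | h | h : #t = 0 ∨ #t = 2 ∨ #t = 4 := by omega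
  · exact card_eq_zero.mp h
  · obtain ⟨a, b, hab, rfl⟩ := card_eq_two.mp h
    rw [sum_pair hab, id, id, ← ZModModule.sub_eq_add, sub_eq_zero] at hsum
    exact absurd hsum hab
  · obtain ⟨a, b, c, d, hab, hac, had, hbc, hbd, hcd, rfl⟩ := card_eq_four.mp h
    simp only [insert_subset_iff, singleton_subset_iff, ← mem_coe] at hts
    obtain ⟨ha, hb, hc, hd⟩ := hts
    refine absurd ?_ (hC a ha b hb c hc d hd hab hac had hbc hbd hcd)
    simpa [hab, hac, had, hbc, hbd, hcd, add_assoc] using hsum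

/-- For a 5-element cap `C` with `y` the sum of its five elements:
the affine span of `C` is the disjoint union `qc(C) ∪ {y}`, the quad closure `qc(C)`
has exactly 15 elements, and the affine span is a 4-dimensional flat. -/
theorem five_cap_structure {n : ℕ} (C : Finset (Fin n → ZMod 2))
    (hC : IsCap (C : Set (Fin n → ZMod 2))) (hcard : C.card = 5)
    (y : Fin n → ZMod 2) (hy : y = C.sum id) :
    (affineSpan (ZMod 2) (C : Set (Fin n → ZMod 2)) : Set (Fin n → ZMod 2)) =
        ((C ∪ excl C : Finset (Fin n → ZMod 2)) : Set (Fin n → ZMod 2)) ∪ {y} ∧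
      y ∉ C ∪ excl C ∧
      (C ∪ excl C).card = 15 ∧
      Module.finrank (ZMod 2)
        (affineSpan (ZMod 2) (C : Set (Fin n → ZMod 2))).direction = 4 := by
  have hind : AffineIndependent (ZMod 2) ((↑) : C → Fin n → ZMod 2) :=
    affineIndependent_of_forall_even_sum_eq_zero fun _ ht he hsum =>
      hC.eq_empty_of_even_of_sum_eq_zero hcard.le ht he hsum
  have hodd : ∀ t ∈ powersetCard 1 C ∪ powersetCard 3 C, t ⊆ C ∧ Odd #t := by
    simp only [mem_union, mem_powersetCard]
    rintro t (⟨hts, h⟩ | ⟨hts, h⟩) <;> exact ⟨hts, by rw [h]; decide⟩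
  refine ⟨?_, ?_, ?_, ?_⟩
  · rw [coe_affineSpan_eq_image_sum_filter_odd, filter_odd_card_powerset_of_card_eq_five hcard,
      image_insert, ← union_excl_eq_image, ← hy, coe_insert, Set.insert_eq, Set.union_comm]
  · rw [union_excl_eq_image, hy]
    intro hmem
    obtain ⟨t, ht, hsum⟩ := mem_image.mp hmem
    obtain rfl := hind.injOn_sum (hodd t ht) ⟨subset_rfl, by rw [hcard]; decide⟩ hsum
    simp [mem_powersetCard, hcard] at ht
  · have hdisj : Disjoint (powersetCard 1 C) (powersetCard 3 C) :=
      disjoint_left.mpr fun t h1 h3 => by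
        rw [mem_powersetCard] at h1 h3
        omega
    rw [union_excl_eq_image, card_image_of_injOn (hind.injOn_sum.mono hodd),
      card_union_of_disjoint hdisj, card_powersetCard, card_powersetCard, hcard]
    rfl
  · rw [direction_affineSpan]
    have := hind.finrank_vectorSpan (n := 4) (by simp [hcard])
    rwa [Subtype.range_coe_subtype, setOfPred_mem] at this
end

section
/- Let C be a 5-element cap in (Z/2Z)^n and y the sum of all elements of C. Then every point in the exclude set of the 6-element set C ∪ {y} has multiplicity exactly 2, i.e., it can be written as a sum of a 3-element subset of C ∪ {y} in exactly two ways. -/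
def mult {n : ℕ} (S : Finset (Fin n → ZMod 2)) (p : Fin n → ZMod 2) : ℕ :=
  ((S.powersetCard 3).filter (fun t => t.sum id = p)).card

open Finset

variable {n : ℕ}

lemma sdiff_mem_powersetCard {α : Type*} [DecidableEq α] {S t : Finset α} {k : ℕ}
    (ht : t ∈ S.powersetCard k) : S \ t ∈ S.powersetCard (#S - k) := by
  rw [mem_powersetCard] at ht ⊢
  exact ⟨sdiff_subset, by rw [card_sdiff_of_subset ht.1, ht.2]⟩

lemma ZMod.pi_neg_eq_self_mod_two (v : Fin n → ZMod 2) : -v = v :=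
  funext fun i => ZMod.neg_eq_self_mod_two (v i)

lemma ZMod.pi_add_self_mod_two (v : Fin n → ZMod 2) : v + v = 0 :=
  add_eq_zero_iff_eq_neg.mpr (ZMod.pi_neg_eq_self_mod_two v).symm

lemma sum_ne_zero_of_card_eq_two_s12 {s : Finset (Fin n → ZMod 2)} (hs : #s = 2) :
    s.sum id ≠ 0 := by
  obtain ⟨a, b, hab, rfl⟩ := card_eq_two.mp hs
  rw [sum_pair hab, id, id, Ne, add_eq_zero_iff_eq_neg, ZMod.pi_neg_eq_self_mod_two]
  exact hab

lemma sum_sdiff_eq_of_sum_eq_zero {S t : Finset (Fin n → ZMod 2)} (hS : S.sum id = 0)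
    (ht : t ⊆ S) : (S \ t).sum id = t.sum id := by
  rw [sum_sdiff_eq_sub ht, hS, zero_sub, ZMod.pi_neg_eq_self_mod_two]

lemma IsCap.sum_ne_zero_of_card_eq_four_s12 {C s : Finset (Fin n → ZMod 2)}
    (hC : IsCap (C : Set (Fin n → ZMod 2))) (hs : s ⊆ C) (hcard : #s = 4) : s.sum id ≠ 0 := by
  obtain ⟨a, t, hat, rfl, ht⟩ := card_eq_succ.mp hcard
  obtain ⟨b, c, d, hbc, hbd, hcd, rfl⟩ := card_eq_three.mp ht
  simp only [mem_insert, mem_singleton, not_or] at hat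
  obtain ⟨hab, hac, had⟩ := hat
  simp only [insert_subset_iff, singleton_subset_iff] at hs
  obtain ⟨ha, hb, hc, hd⟩ := hs
  rw [sum_insert (by simp [hab, hac, had]), sum_insert (by simp [hbc, hbd]), sum_pair hcd]
  simpa only [id, add_assoc] using hC a ha b hb c hc d hd hab hac had hbc hbd hcd

lemma IsCap.sum_notMem {C : Finset (Fin n → ZMod 2)} (hC : IsCap (C : Set (Fin n → ZMod 2)))
    (hcard : #C = 5) : C.sum id ∉ C := fun hy =>
  hC.sum_ne_zero_of_card_eq_four_s12 (erase_subset _ C) (by rw [card_erase_of_mem hy, hcard])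
    (by rw [sum_erase_eq_sub hy, id, sub_self])

lemma IsCap.injOn_sum_powersetCard_three {C : Finset (Fin n → ZMod 2)}
    (hC : IsCap (C : Set (Fin n → ZMod 2))) (hcard : #C ≤ 5) :
    Set.InjOn (fun t => t.sum id) (C.powersetCard 3 : Set (Finset (Fin n → ZMod 2))) := by
  intro t₁ h₁ t₂ h₂ hsum
  simp only [mem_coe, mem_powersetCard] at h₁ h₂
  by_contra hne
  have hdiff : (t₁ \ t₂).sum id = (t₂ \ t₁).sum id := by
    rw [← add_right_inj ((t₁ ∩ t₂).sum id), sum_inter_add_sum_sdiff, inter_comm,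
      sum_inter_add_sum_sdiff]
    exact hsum
  have hdisj : Disjoint (t₁ \ t₂) (t₂ \ t₁) := disjoint_sdiff_sdiff
  have hzero : (t₁ \ t₂ ∪ t₂ \ t₁).sum id = 0 := by
    rw [sum_union hdisj, hdiff, ZMod.pi_add_self_mod_two]
  have hsub : t₁ \ t₂ ∪ t₂ \ t₁ ⊆ C :=
    union_subset (sdiff_subset.trans h₁.1) (sdiff_subset.trans h₂.1)
  have hk : #(t₁ \ t₂) = #(t₂ \ t₁) := card_sdiff_comm (h₁.2.trans h₂.2.symm)
  have hpos : #(t₁ \ t₂) ≠ 0 := fun h =>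
    hne (eq_of_subset_of_card_le (sdiff_eq_empty_iff_subset.mp (card_eq_zero.mp h)) (by omega))
  have hU := card_union_of_disjoint hdisj
  have hle := card_le_card hsub
  obtain h | h : #(t₁ \ t₂ ∪ t₂ \ t₁) = 2 ∨ #(t₁ \ t₂ ∪ t₂ \ t₁) = 4 := by omega
  · exact sum_ne_zero_of_card_eq_two_s12 h hzero
  · exact hC.sum_ne_zero_of_card_eq_four_s12 hsub h hzero

theorem mult_eq_two_of_sum_eq_zero {S : Finset (Fin n → ZMod 2)} {a : Fin n → ZMod 2}
    (hS : S.sum id = 0) (hcard : #S = 6) (ha : a ∈ S)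
    (hinj : Set.InjOn (fun t => t.sum id)
      ((S.erase a).powersetCard 3 : Set (Finset (Fin n → ZMod 2))))
    {p : Fin n → ZMod 2} (hp : p ∈ excl S) : mult S p = 2 := by
  have compl_mem : ∀ t ∈ S.powersetCard 3, S \ t ∈ S.powersetCard 3 := fun t ht => by
    simpa [hcard] using sdiff_mem_powersetCard ht
  have compl_sum : ∀ t ∈ S.powersetCard 3, (S \ t).sum id = t.sum id := fun t ht =>
    sum_sdiff_eq_of_sum_eq_zero hS (mem_powersetCard.mp ht).1
  have avoid_a : ∀ t ∈ S.powersetCard 3,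
      t ∈ (S.erase a).powersetCard 3 ∨ S \ t ∈ (S.erase a).powersetCard 3 := by
    intro t ht
    by_cases hat : a ∈ t
    · right
      refine mem_powersetCard.mpr ⟨?_, (mem_powersetCard.mp (compl_mem t ht)).2⟩
      exact subset_erase.mpr ⟨sdiff_subset, fun h => (mem_sdiff.mp h).2 hat⟩
    · left
      exact mem_powersetCard.mpr ⟨subset_erase.mpr ⟨(mem_powersetCard.mp ht).1, hat⟩,
        (mem_powersetCard.mp ht).2⟩
  obtain ⟨u, hu, rfl⟩ : ∃ u ∈ (S.erase a).powersetCard 3, u.sum id = p := by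
    obtain ⟨t, ht, rfl⟩ := mem_image.mp hp
    rcases avoid_a t ht with h | h
    exacts [⟨t, h, rfl⟩, ⟨S \ t, h, compl_sum t ht⟩]
  have huS : u ∈ S.powersetCard 3 := powersetCard_mono (erase_subset a S) hu
  have hfibre : (S.powersetCard 3).filter (fun t => t.sum id = u.sum id) = {u, S \ u} := by
    ext t
    simp only [mem_filter, mem_insert, mem_singleton]
    constructor
    · rintro ⟨ht, hsum⟩
      rcases avoid_a t ht with h | h
      · exact .inl (hinj h hu hsum)
      · rw [← hinj h hu ((compl_sum t ht).trans hsum),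
          Finset.sdiff_sdiff_eq_self (mem_powersetCard.mp ht).1]
        exact .inr rfl
    · rintro (rfl | rfl)
      exacts [⟨huS, rfl⟩, ⟨compl_mem u huS, compl_sum u huS⟩]
  have hau : a ∉ u := fun h => notMem_erase a S ((mem_powersetCard.mp hu).1 h)
  have hne : u ≠ S \ u := fun h => hau (by rw [h]; exact mem_sdiff.mpr ⟨ha, hau⟩)
  rw [mult, hfibre, card_pair hne]

/-- For a 5-element cap `C` with `y` the sum of its elements, every point in the
exclude set of `C ∪ {y}` has multiplicity exactly 2 with respect to `C ∪ {y}`. -/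
theorem five_cap_plus_sum_mult_two {n : ℕ} (C : Finset (Fin n → ZMod 2))
    (hC : IsCap (C : Set (Fin n → ZMod 2))) (hcard : C.card = 5)
    (y : Fin n → ZMod 2) (hy : y = C.sum id) :
    ∀ p ∈ excl (insert y C), mult (insert y C) p = 2 := by
  intro p hp
  have hyC : y ∉ C := hy ▸ hC.sum_notMem hcard
  have hS : (insert y C).sum id = 0 := by
    rw [sum_insert hyC, ← hy, id, ZMod.pi_add_self_mod_two]
  refine mult_eq_two_of_sum_eq_zero hS (by rw [card_insert_of_notMem hyC, hcard])
    (mem_insert_self y C) ?_ hp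
  rw [erase_insert hyC]
  exact hC.injOn_sum_powersetCard_three hcard.le
end

section
/- A cap C in (Z/2Z)^n has an exclude point of multiplicity at least 2 if and only if C contains six points lying in a common 4-dimensional affine subspace. -/
open Finset

namespace CapAux

variable {n : ℕ}

abbrev Pt (n : ℕ) := Fin n → ZMod 2

lemma neg_eq' (a : Pt n) : -a = a := by
  funext i; exact CharTwo.neg_eq _

lemma sub_eq_add' (a b : Pt n) : a - b = a + b := by
  rw [sub_eq_add_neg, neg_eq']

lemma add_self' (a : Pt n) : a + a = 0 := by
  rw [← sub_eq_add', sub_self]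

lemma eq_of_add_eq_zero' {a b : Pt n} (h : a + b = 0) : a = b := by
  have : a + (b + b) = 0 + b := by rw [← add_assoc, h]
  simpa [add_self'] using this

lemma pair_sum_ne_zero {a b : Pt n} (h : a ≠ b) : a + b ≠ 0 :=
  fun h0 => h (eq_of_add_eq_zero' h0)

/-- four distinct points of a cap have nonzero sum -/
lemma cap4 {C F : Finset (Pt n)} (hC : IsCap (C : Set (Pt n)))
    (hFC : F ⊆ C) (hF : F.card = 4) : F.sum id ≠ 0 := by
  obtain ⟨a, t, hat, rfl, ht3⟩ := Finset.card_eq_succ.mp hF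
  obtain ⟨b, c, d, hbc, hbd, hcd, rfl⟩ := Finset.card_eq_three.mp ht3
  simp only [Finset.mem_insert, Finset.mem_singleton, not_or] at hat
  obtain ⟨hab, hac, had⟩ := hat
  have hsum : (insert a {b, c, d} : Finset (Pt n)).sum id = a + b + c + d := by
    rw [Finset.sum_insert (by simp [hab, hac, had])]
    rw [Finset.sum_insert (by simp [hbc, hbd]), Finset.sum_insert (by simp [hcd]),
      Finset.sum_singleton]
    simp [id]; ring
  rw [hsum]
  have h := hC a (hFC (by simp)) b (hFC (by simp)) c (hFC (by simp)) d (hFC (by simp))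
  exact h hab hac had hbc hbd hcd

/-- two 2-element subsets of a cap with equal sums are equal -/
lemma pair_inj {C : Finset (Pt n)} (hC : IsCap (C : Set (Pt n)))
    {t₁ t₂ : Finset (Pt n)} (h1 : t₁ ⊆ C) (h2 : t₂ ⊆ C)
    (hc1 : t₁.card = 2) (hc2 : t₂.card = 2)
    (hs : t₁.sum id = t₂.sum id) : t₁ = t₂ := by
  obtain ⟨a, b, hab, rfl⟩ := Finset.card_eq_two.mp hc1
  obtain ⟨c, d, hcd, rfl⟩ := Finset.card_eq_two.mp hc2
  rw [Finset.sum_pair hab, Finset.sum_pair hcd] at hs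
  simp only [id] at hs
  by_cases hac : a = c
  · subst hac
    have : b = d := by
      have := add_left_cancel hs; exact this
    rw [this]
  by_cases had : a = d
  · subst had
    rw [add_comm c a] at hs
    have hbc : b = c := add_left_cancel hs
    rw [hbc, Finset.pair_comm]
  by_cases hbc : b = c
  · subst hbc
    rw [add_comm a b] at hs
    have : a = d := add_left_cancel hs
    rw [this, Finset.pair_comm]
  by_cases hbd : b = d
  · subst hbd
    rw [add_comm a b, add_comm c b] at hs
    have : a = c := add_left_cancel hs
    exact absurd this hac
  · exfalso
    have hmem : ∀ x ∈ ({a, b} : Finset (Pt n)), x ∈ C := fun x hx => h1 hx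
    have h := hC a (h1 (by simp)) b (h1 (by simp)) c (h2 (by simp)) d (h2 (by simp))
      hab hac had hbc hbd hcd
    apply h
    calc a + b + c + d = (a + b) + (c + d) := by ring
      _ = (c + d) + (c + d) := by rw [hs]
      _ = 0 := add_self' _

lemma mem_pow2 {D t : Finset (Pt n)} (ht : t ∈ D.powersetCard 2) :
    t ⊆ D ∧ t.card = 2 := Finset.mem_powersetCard.mp ht

lemma Q_card {C D : Finset (Pt n)} (hC : IsCap (C : Set (Pt n)))
    (hDC : D ⊆ C) (hD6 : D.card = 6) :
    ((D.powersetCard 2).image (fun t => t.sum id)).card = 15 := by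
  have hinj : Set.InjOn (fun t : Finset (Pt n) => t.sum id) ↑(D.powersetCard 2) := by
    intro t₁ h1 t₂ h2 hs
    simp only [Finset.mem_coe] at h1 h2
    obtain ⟨hs1, hc1⟩ := mem_pow2 h1
    obtain ⟨hs2, hc2⟩ := mem_pow2 h2
    exact pair_inj hC (hs1.trans hDC) (hs2.trans hDC) hc1 hc2 hs
  rw [Finset.card_image_of_injOn hinj, Finset.card_powersetCard, hD6]
  decide

lemma zero_not_mem_Q {D : Finset (Pt n)} :
    (0 : Pt n) ∉ (D.powersetCard 2).image (fun t => t.sum id) := by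
  intro h0
  obtain ⟨t, ht, hsum⟩ := Finset.mem_image.mp h0
  obtain ⟨_, hc⟩ := mem_pow2 ht
  obtain ⟨a, b, hab, rfl⟩ := Finset.card_eq_two.mp hc
  rw [Finset.sum_pair hab] at hsum
  exact pair_sum_ne_zero hab hsum

open scoped Classical

/-- the finset of elements of a submodule -/
noncomputable def modFinset (U : Submodule (ZMod 2) (Pt n)) : Finset (Pt n) :=
  Finset.univ.filter (fun x => x ∈ U)

lemma mem_modFinset {U : Submodule (ZMod 2) (Pt n)} {x : Pt n} :
    x ∈ modFinset U ↔ x ∈ U := by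
  simp [modFinset]

lemma modFinset_card (U : Submodule (ZMod 2) (Pt n)) :
    (modFinset U).card = 2 ^ Module.finrank (ZMod 2) U := by
  have h1 : (modFinset U).card = Nat.card U := by
    rw [modFinset, ← Fintype.card_subtype]
    exact (Nat.card_eq_fintype_card).symm
  haveI : Fintype U := Fintype.ofFinite U
  rw [h1, Nat.card_eq_fintype_card, Module.card_eq_pow_finrank (K := ZMod 2), ZMod.card]

lemma four_le_finrank {C D : Finset (Pt n)} (hC : IsCap (C : Set (Pt n)))
    (hDC : D ⊆ C) (hD6 : D.card = 6) (U : Submodule (ZMod 2) (Pt n))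
    (hU : ∀ a ∈ D, ∀ b ∈ D, a + b ∈ U) : 4 ≤ Module.finrank (ZMod 2) U := by
  classical
  set Q := (D.powersetCard 2).image (fun t => t.sum id) with hQ
  have hsub : insert (0 : Pt n) Q ⊆ modFinset U := by
    intro x hx
    rw [mem_modFinset]
    rcases Finset.mem_insert.mp hx with rfl | hx
    · exact U.zero_mem
    · obtain ⟨t, ht, rfl⟩ := Finset.mem_image.mp hx
      obtain ⟨hsub', hc⟩ := mem_pow2 ht
      obtain ⟨a, b, hab, rfl⟩ := Finset.card_eq_two.mp hc
      rw [Finset.sum_pair hab]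
      exact hU a (hsub' (by simp)) b (hsub' (by simp))
  have hcard : (insert (0 : Pt n) Q).card = 16 := by
    rw [Finset.card_insert_of_notMem zero_not_mem_Q, Q_card hC hDC hD6]
  have h16 : 16 ≤ 2 ^ Module.finrank (ZMod 2) U := by
    rw [← modFinset_card U, ← hcard]
    exact Finset.card_le_card hsub
  have : (2:ℕ) ^ 4 ≤ 2 ^ Module.finrank (ZMod 2) U := by norm_num at h16 ⊢; exact h16
  exact (Nat.pow_le_pow_iff_right (by norm_num)).mp this

lemma pair_sum_surj {C D : Finset (Pt n)} (hC : IsCap (C : Set (Pt n)))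
    (hDC : D ⊆ C) (hD6 : D.card = 6) (U : Submodule (ZMod 2) (Pt n))
    (hU : ∀ a ∈ D, ∀ b ∈ D, a + b ∈ U)
    (hr : Module.finrank (ZMod 2) U = 4) {w : Pt n} (hw : w ∈ U) (hw0 : w ≠ 0) :
    ∃ t ∈ D.powersetCard 2, t.sum id = w := by
  classical
  set Q := (D.powersetCard 2).image (fun t => t.sum id) with hQ
  set N := (modFinset U).erase 0 with hN
  have hQN : Q ⊆ N := by
    intro x hx
    obtain ⟨t, ht, rfl⟩ := Finset.mem_image.mp hx
    obtain ⟨hsub', hc⟩ := mem_pow2 ht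
    obtain ⟨a, b, hab, rfl⟩ := Finset.card_eq_two.mp hc
    rw [Finset.sum_pair hab]
    refine Finset.mem_erase.mpr ⟨pair_sum_ne_zero hab, ?_⟩
    rw [mem_modFinset]
    exact hU a (hsub' (by simp)) b (hsub' (by simp))
  have hNcard : N.card = 15 := by
    rw [hN, Finset.card_erase_of_mem (mem_modFinset.mpr U.zero_mem), modFinset_card, hr]
    norm_num
  have hQeqN : Q = N :=
    Finset.eq_of_subset_of_card_le hQN (by rw [hNcard]; rw [hQ, Q_card hC hDC hD6])
  have hwN : w ∈ N := Finset.mem_erase.mpr ⟨hw0, mem_modFinset.mpr hw⟩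

  rw [← hQeqN] at hwN
  obtain ⟨t, ht, hts⟩ := Finset.mem_image.mp hwN
  exact ⟨t, ht, hts⟩

lemma triple_disjoint {C t₁ t₂ : Finset (Pt n)} (hC : IsCap (C : Set (Pt n)))
    (h1 : t₁ ⊆ C) (h2 : t₂ ⊆ C) (hc1 : t₁.card = 3) (hc2 : t₂.card = 3)
    (hne : t₁ ≠ t₂) (hs : t₁.sum id = t₂.sum id) : Disjoint t₁ t₂ := by
  classical
  have hu1 : (t₁ \ t₂).sum id + (t₁ ∩ t₂).sum id = t₁.sum id := by
    rw [← Finset.sdiff_inter_self_left t₁ t₂]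
    exact Finset.sum_sdiff (Finset.inter_subset_left)
  have hu2 : (t₂ \ t₁).sum id + (t₁ ∩ t₂).sum id = t₂.sum id := by
    rw [Finset.inter_comm t₁ t₂, ← Finset.sdiff_inter_self_left t₂ t₁]
    exact Finset.sum_sdiff (Finset.inter_subset_left)
  have hsd : (t₁ \ t₂).sum id = (t₂ \ t₁).sum id := by
    have : (t₁ \ t₂).sum id + (t₁ ∩ t₂).sum id = (t₂ \ t₁).sum id + (t₁ ∩ t₂).sum id := by
      rw [hu1, hu2, hs]
    exact add_right_cancel this
  have hcd1 : (t₁ \ t₂).card + (t₁ ∩ t₂).card = 3 := by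
    rw [Finset.card_sdiff_add_card_inter, hc1]
  have hcd2 : (t₂ \ t₁).card + (t₁ ∩ t₂).card = 3 := by
    rw [Finset.inter_comm t₁ t₂, Finset.card_sdiff_add_card_inter, hc2]
  have hcases : (t₁ ∩ t₂).card = 0 ∨ (t₁ ∩ t₂).card = 1 ∨ (t₁ ∩ t₂).card = 2 ∨
      (t₁ ∩ t₂).card = 3 := by omega
  rcases hcases with h | h | h | h
  · rw [Finset.disjoint_iff_inter_eq_empty]
    exact Finset.card_eq_zero.mp h
  · -- intersection has one point: 4 distinct points summing to zero
    exfalso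
    have hcu : (t₁ \ t₂).card = 2 := by omega
    have hcv : (t₂ \ t₁).card = 2 := by omega
    have hdisj : Disjoint (t₁ \ t₂) (t₂ \ t₁) := disjoint_sdiff_sdiff
    have hG4 : ((t₁ \ t₂) ∪ (t₂ \ t₁)).card = 4 := by
      rw [Finset.card_union_of_disjoint hdisj, hcu, hcv]
    have hGC : (t₁ \ t₂) ∪ (t₂ \ t₁) ⊆ C := by
      intro x hx
      rcases Finset.mem_union.mp hx with hx | hx
      · exact h1 (Finset.sdiff_subset hx)
      · exact h2 (Finset.sdiff_subset hx)
    apply cap4 hC hGC hG4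
    rw [Finset.sum_union hdisj, hsd]
    exact add_self' _
  · -- intersection has two points: the remaining singletons are equal
    exfalso
    have hcu : (t₁ \ t₂).card = 1 := by omega
    have hcv : (t₂ \ t₁).card = 1 := by omega
    obtain ⟨x, hx⟩ := Finset.card_eq_one.mp hcu
    obtain ⟨y, hy⟩ := Finset.card_eq_one.mp hcv
    rw [hx, hy, Finset.sum_singleton, Finset.sum_singleton] at hsd
    simp only [id_eq] at hsd
    have hxmem : x ∈ t₁ \ t₂ := hx ▸ Finset.mem_singleton_self x
    have hymem : y ∈ t₂ \ t₁ := hy ▸ Finset.mem_singleton_self y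
    rw [Finset.mem_sdiff] at hxmem hymem
    exact hxmem.2 (hsd ▸ hymem.1)
  · -- full intersection: t₁ = t₂
    exfalso
    have : t₁ ∩ t₂ = t₁ := Finset.eq_of_subset_of_card_le Finset.inter_subset_left
      (by omega)
    have ht12 : t₁ ⊆ t₂ := by
      rw [← this]; exact Finset.inter_subset_right
    exact hne (Finset.eq_of_subset_of_card_le ht12 (by omega))

lemma six_smul_eq_zero (z : Pt n) : (6 : ℕ) • z = 0 := by
  rw [show (6:ℕ) = 3 * 2 by norm_num, mul_smul, two_nsmul, add_self' z, smul_zero]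

lemma four_smul_eq_zero (z : Pt n) : (4 : ℕ) • z = 0 := by
  rw [show (4:ℕ) = 2 * 2 by norm_num, mul_smul, two_nsmul]
  exact add_self' _

lemma forward_dir {C : Finset (Pt n)} (hC : IsCap (C : Set (Pt n)))
    (h : ∃ p : Pt n, 2 ≤ mult C p) :
    ∃ D ⊆ C, D.card = 6 ∧
      ∃ W : AffineSubspace (ZMod 2) (Pt n),
        Module.finrank (ZMod 2) W.direction = 4 ∧
        (D : Set (Pt n)) ⊆ (W : Set (Pt n)) := by
  classical
  obtain ⟨p, hp⟩ := h
  rw [mult] at hp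
  obtain ⟨t₁, h1, t₂, h2, hne⟩ := Finset.one_lt_card.mp hp
  rw [Finset.mem_filter, Finset.mem_powersetCard] at h1 h2
  obtain ⟨⟨ht1C, ht1c⟩, ht1s⟩ := h1
  obtain ⟨⟨ht2C, ht2c⟩, ht2s⟩ := h2
  have hdisj : Disjoint t₁ t₂ :=
    triple_disjoint hC ht1C ht2C ht1c ht2c hne (by rw [ht1s, ht2s])
  set D := t₁ ∪ t₂ with hD
  have hDC : D ⊆ C := Finset.union_subset ht1C ht2C
  have hD6 : D.card = 6 := by
    rw [hD, Finset.card_union_of_disjoint hdisj, ht1c, ht2c]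
  have hDsum : D.sum id = 0 := by
    rw [hD, Finset.sum_union hdisj, ht1s, ht2s]
    exact add_self' p
  obtain ⟨z, hz⟩ := Finset.card_pos.mp (show 0 < D.card by omega)
  set U := Submodule.span (ZMod 2) ((D.image (fun x => x + z)) : Set (Pt n)) with hUdef
  have pair_eq : ∀ a b : Pt n, (a + z) + (b + z) = a + b := by
    intro a b
    calc (a + z) + (b + z) = (a + b) + (z + z) := by ring
      _ = a + b := by rw [add_self' z, add_zero]
  have hU : ∀ a ∈ D, ∀ b ∈ D, a + b ∈ U := by
    intro a ha b hb
    rw [← pair_eq a b]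
    exact U.add_mem
      (Submodule.subset_span (by exact_mod_cast Finset.mem_image_of_mem _ ha))
      (Submodule.subset_span (by exact_mod_cast Finset.mem_image_of_mem _ hb))
  have hge : 4 ≤ Module.finrank (ZMod 2) U := four_le_finrank hC hDC hD6 U hU
  -- upper bound
  obtain ⟨w, hwD, hwz⟩ := Finset.exists_mem_ne (show 1 < D.card by omega) z
  set S₂ := (D.erase w).image (fun x => x + z) with hS₂
  set S' := S₂.erase 0 with hS'
  have hzS₂ : (0 : Pt n) ∈ S₂ := by
    rw [hS₂]
    exact Finset.mem_image.mpr ⟨z, Finset.mem_erase.mpr ⟨fun hzw => hwz hzw.symm, hz⟩,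
      add_self' z⟩
  have hsum0 : (D.sum fun x => x + z) = 0 := by
    rw [Finset.sum_add_distrib, Finset.sum_const, hD6]
    have : D.sum (fun x => x) = D.sum id := rfl
    rw [this, hDsum, zero_add, six_smul_eq_zero]
  have hspan2 : U = Submodule.span (ZMod 2) (S₂ : Set (Pt n)) := by
    apply le_antisymm
    · rw [hUdef, Submodule.span_le]
      intro x hx
      rw [Finset.mem_coe, Finset.mem_image] at hx
      obtain ⟨a, haD, rfl⟩ := hx
      by_cases haw : a = w
      · subst haw
        have herase : ((D.erase a).sum fun x => x + z) = a + z := by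
          have h' : ((D.erase a).sum fun x => x + z) + (a + z) = 0 := by
            rw [Finset.sum_erase_add D _ hwD, hsum0]
          exact eq_of_add_eq_zero' h'
        rw [← herase]
        exact Submodule.sum_mem _ (fun c hc =>
          Submodule.subset_span (by exact_mod_cast Finset.mem_image_of_mem _ hc))
      · exact Submodule.subset_span
          (by exact_mod_cast Finset.mem_image_of_mem _ (Finset.mem_erase.mpr ⟨haw, haD⟩))
    · rw [Submodule.span_le]
      intro x hx
      rw [Finset.mem_coe, hS₂, Finset.mem_image] at hx
      obtain ⟨a, haD, rfl⟩ := hx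
      exact Submodule.subset_span
        (by exact_mod_cast Finset.mem_image_of_mem _ (Finset.mem_of_mem_erase haD))
  have hspan' : U = Submodule.span (ZMod 2) (S' : Set (Pt n)) := by
    rw [hspan2, ← Finset.insert_erase hzS₂, Finset.coe_insert, Submodule.span_insert_zero]
  have hS'card : S'.card ≤ 4 := by
    have h1 : S'.card = S₂.card - 1 := by rw [hS', Finset.card_erase_of_mem hzS₂]
    have h2 : S₂.card ≤ (D.erase w).card := Finset.card_image_le
    have h3 : (D.erase w).card = 5 := by rw [Finset.card_erase_of_mem hwD, hD6]
    omega
  have hle : Module.finrank (ZMod 2) U ≤ 4 := by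
    rw [hspan']
    have := finrank_span_finset_le_card (R := ZMod 2) S'
    simp only [Set.finrank] at this
    exact this.trans hS'card
  have hrank : Module.finrank (ZMod 2) U = 4 := le_antisymm hle hge
  refine ⟨D, hDC, hD6, AffineSubspace.mk' z U, ?_, ?_⟩
  · rw [AffineSubspace.direction_mk']
    exact hrank
  · intro x hx
    rw [Finset.mem_coe] at hx
    show x ∈ AffineSubspace.mk' z U
    rw [AffineSubspace.mem_mk']
    have : x -ᵥ z = x + z := by rw [vsub_eq_sub, sub_eq_add']
    rw [this]
    exact Submodule.subset_span (by exact_mod_cast Finset.mem_image_of_mem _ hx)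

lemma sum_erase_char2 {s : Finset (Pt n)} {a : Pt n} (ha : a ∈ s) :
    (s.erase a).sum id = s.sum id + a := by
  have h : (s.erase a).sum id + a = s.sum id := Finset.sum_erase_add s id ha
  calc (s.erase a).sum id = (s.erase a).sum id + (a + a) := by rw [add_self', add_zero]
    _ = ((s.erase a).sum id + a) + a := (add_assoc _ _ _).symm
    _ = s.sum id + a := by rw [h]

lemma converse_dir {C : Finset (Pt n)} (hC : IsCap (C : Set (Pt n)))
    (h : ∃ D ⊆ C, D.card = 6 ∧
      ∃ W : AffineSubspace (ZMod 2) (Pt n),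
        Module.finrank (ZMod 2) W.direction = 4 ∧
        (D : Set (Pt n)) ⊆ (W : Set (Pt n))) :
    ∃ p : Pt n, 2 ≤ mult C p := by
  classical
  obtain ⟨D, hDC, hD6, W, hW4, hDW⟩ := h
  have hDWmem : ∀ x ∈ D, x ∈ W := fun x hx => hDW (Finset.mem_coe.mpr hx)
  have hU : ∀ a ∈ D, ∀ b ∈ D, a + b ∈ W.direction := by
    intro a ha b hb
    have hv := AffineSubspace.vsub_mem_direction (hDWmem a ha) (hDWmem b hb)
    rwa [vsub_eq_sub, sub_eq_add'] at hv
  obtain ⟨F, hFD, hF4⟩ := Finset.exists_subset_card_eq (s := D) (n := 4) (by omega)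
  obtain ⟨z, hzF⟩ := Finset.card_pos.mp (show 0 < F.card by omega)
  set w := F.sum id with hw
  have hwdir : w ∈ W.direction := by
    have heq : w = F.sum (fun x => x + z) := by
      rw [Finset.sum_add_distrib, Finset.sum_const, hF4, four_smul_eq_zero, add_zero, hw]
      rfl
    rw [heq]
    refine Submodule.sum_mem _ (fun c hc => ?_)
    have hv := AffineSubspace.vsub_mem_direction (hDWmem c (hFD hc)) (hDWmem z (hFD hzF))
    rwa [vsub_eq_sub, sub_eq_add'] at hv
  have hw0 : w ≠ 0 := cap4 hC (hFD.trans hDC) hF4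
  obtain ⟨t, ht, hts⟩ := pair_sum_surj hC hDC hD6 W.direction hU hW4 hwdir hw0
  obtain ⟨htD, htc⟩ := mem_pow2 ht
  obtain ⟨a, b, hab, rfl⟩ := Finset.card_eq_two.mp htc
  rw [Finset.sum_pair hab] at hts
  simp only [id_eq] at hts
  have haD : a ∈ D := htD (by simp)
  have hbD : b ∈ D := htD (by simp)
  -- deduce that the sum of D is zero
  have hDsum : D.sum id = 0 := by
    by_cases haF : a ∈ F <;> by_cases hbF : b ∈ F
    · exfalso
      set G := (F.erase a).erase b with hG
      have hbFa : b ∈ F.erase a := Finset.mem_erase.mpr ⟨fun hba => hab hba.symm, hbF⟩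
      have hGc : G.card = 2 := by
        rw [hG, Finset.card_erase_of_mem hbFa, Finset.card_erase_of_mem haF, hF4]
      have hGsum : G.sum id = 0 := by
        rw [hG, sum_erase_char2 hbFa, sum_erase_char2 haF, ← hw]
        calc w + a + b = w + (a + b) := by ring
          _ = w + w := by rw [hts]
          _ = 0 := add_self' w
      obtain ⟨c, d, hcd, hGcd⟩ := Finset.card_eq_two.mp hGc
      rw [hGcd, Finset.sum_pair hcd] at hGsum
      simp only [id_eq] at hGsum
      exact hcd (eq_of_add_eq_zero' hGsum)
    · exfalso
      set G := insert b (F.erase a) with hG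
      have hbFa : b ∉ F.erase a := fun hb' => hbF (Finset.mem_of_mem_erase hb')
      have hGc : G.card = 4 := by
        rw [hG, Finset.card_insert_of_notMem hbFa, Finset.card_erase_of_mem haF, hF4]
      have hGC : G ⊆ C := by
        intro x hx
        rcases Finset.mem_insert.mp hx with rfl | hx
        · exact hDC hbD
        · exact (hFD.trans hDC) (Finset.mem_of_mem_erase hx)
      apply cap4 hC hGC hGc
      rw [hG, Finset.sum_insert hbFa, sum_erase_char2 haF, ← hw]
      simp only [id_eq]
      calc b + (w + a) = w + (a + b) := by ring
        _ = w + w := by rw [hts]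
        _ = 0 := add_self' w
    · exfalso
      set G := insert a (F.erase b) with hG
      have haFb : a ∉ F.erase b := fun ha' => haF (Finset.mem_of_mem_erase ha')
      have hGc : G.card = 4 := by
        rw [hG, Finset.card_insert_of_notMem haFb, Finset.card_erase_of_mem hbF, hF4]
      have hGC : G ⊆ C := by
        intro x hx
        rcases Finset.mem_insert.mp hx with rfl | hx
        · exact hDC haD
        · exact (hFD.trans hDC) (Finset.mem_of_mem_erase hx)
      apply cap4 hC hGC hGc
      rw [hG, Finset.sum_insert haFb, sum_erase_char2 hbF, ← hw]
      simp only [id_eq]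
      calc a + (w + b) = w + (a + b) := by ring
        _ = w + w := by rw [hts]
        _ = 0 := add_self' w
    · have hcDF : (D \ F).card = 2 := by
        rw [Finset.card_sdiff_of_subset hFD, hD6, hF4]
      have habsub : ({a, b} : Finset (Pt n)) ⊆ D \ F := by
        intro x hx
        rcases Finset.mem_insert.mp hx with rfl | hx
        · exact Finset.mem_sdiff.mpr ⟨haD, haF⟩
        · rw [Finset.mem_singleton] at hx
          subst hx
          exact Finset.mem_sdiff.mpr ⟨hbD, hbF⟩
      have hpair : ({a, b} : Finset (Pt n)) = D \ F :=
        Finset.eq_of_subset_of_card_le habsub (by rw [hcDF, Finset.card_pair hab])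
      have hsd : (D \ F).sum id + F.sum id = D.sum id := Finset.sum_sdiff hFD
      have hDFsum : (D \ F).sum id = a + b := by
        rw [← hpair]; exact Finset.sum_pair hab
      rw [hDFsum, hts, ← hw] at hsd
      rw [← hsd]
      exact add_self' w
  -- split D into two triples with equal sums
  obtain ⟨t₁, ht₁D, ht₁c⟩ := Finset.exists_subset_card_eq (s := D) (n := 3) (by omega)
  set t₂ := D \ t₁ with ht₂
  have ht₂c : t₂.card = 3 := by
    rw [ht₂, Finset.card_sdiff_of_subset ht₁D, hD6, ht₁c]
  have hsum2 : t₂.sum id + t₁.sum id = 0 := by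
    rw [ht₂, Finset.sum_sdiff ht₁D, hDsum]
  have hsum_eq : t₂.sum id = t₁.sum id := eq_of_add_eq_zero' hsum2
  have hne : t₁ ≠ t₂ := by
    obtain ⟨x, hx⟩ := Finset.card_pos.mp (show 0 < t₁.card by omega)
    intro heq
    have : x ∈ t₂ := heq ▸ hx
    exact (Finset.mem_sdiff.mp (ht₂ ▸ this)).2 hx
  refine ⟨t₁.sum id, ?_⟩
  rw [mult]
  apply Finset.one_lt_card.mpr
  refine ⟨t₁, ?_, t₂, ?_, hne⟩
  · rw [Finset.mem_filter, Finset.mem_powersetCard]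
    exact ⟨⟨ht₁D.trans hDC, ht₁c⟩, rfl⟩
  · rw [Finset.mem_filter, Finset.mem_powersetCard]
    exact ⟨⟨(Finset.sdiff_subset).trans hDC, ht₂c⟩, hsum_eq⟩

end CapAux

/-- A cap `C` has an exclude point of multiplicity at least 2 if and only if `C` contains
six points lying in a common 4-dimensional affine subspace. -/
theorem mult_two_iff_six_points_in_four_flat {n : ℕ} (C : Finset (Fin n → ZMod 2))
    (hC : IsCap (C : Set (Fin n → ZMod 2))) :
    (∃ p : Fin n → ZMod 2, 2 ≤ mult C p) ↔
      ∃ D ⊆ C, D.card = 6 ∧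
        ∃ W : AffineSubspace (ZMod 2) (Fin n → ZMod 2),
          Module.finrank (ZMod 2) W.direction = 4 ∧
          (D : Set (Fin n → ZMod 2)) ⊆ (W : Set (Fin n → ZMod 2)) := by
  constructor
  · exact CapAux.forward_dir hC
  · exact CapAux.converse_dir hC
end

section
/- Let C be a cap in (Z/2Z)^n containing six points x1,...,x6 lying in a 4-flat F, and let y ∈ C be a point not in F. Then the 4-flat F' in the parallel class of F containing y meets C only in y; moreover the 15 points x_i + x_j + y (for 1 ≤ i < j ≤ 6) are distinct, lie in F', and together with y fill all 16 points of F'. -/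
theorem AffineSubspace.ncard_eq_natCard_pow_finrank {k V P : Type*} [DivisionRing k]
    [AddCommGroup V] [Module k V] [AddTorsor V P] (s : AffineSubspace k P) [Nonempty s]
    [Module.Finite k s.direction] :
    (s : Set P).ncard = Nat.card k ^ Module.finrank k s.direction := by
  rw [← Nat.card_coe_set_eq, SetLike.coe_sort_coe, ← Module.natCard_eq_pow_finrank]
  exact (Nat.card_congr (Equiv.vaddConst (Classical.arbitrary s))).symm

section CharTwo

variable {V : Type*} [AddCommGroup V] [Module (ZMod 2) V]

theorem ZModModule.add_eq_zero_iff_eq {a b : V} : a + b = 0 ↔ a = b := by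
  rw [← ZModModule.sub_eq_add, sub_eq_zero]

theorem add_add_mem_of_direction_eq {s t : AffineSubspace (ZMod 2) V}
    (hd : t.direction = s.direction) {a b p : V} (ha : a ∈ s) (hb : b ∈ s) (hp : p ∈ t) :
    a + b + p ∈ t := by
  have hab : a - b ∈ t.direction := hd ▸ AffineSubspace.vsub_mem_direction ha hb
  simpa [ZModModule.sub_eq_add] using AffineSubspace.vadd_mem_of_mem_direction hab hp

end CharTwo

namespace IsCap

variable {n : ℕ} {C : Set (Fin n → ZMod 2)}

theorem add_add_notMem (hC : IsCap C) {a b c : Fin n → ZMod 2} (ha : a ∈ C) (hb : b ∈ C)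
    (hc : c ∈ C) (hab : a ≠ b) (hac : a ≠ c) (hbc : b ≠ c) : a + b + c ∉ C := by
  intro hd
  refine hC a ha b hb c hc _ hd hab hac ?_ hbc ?_ ?_ (ZModModule.add_self _)
  · rw [Ne, add_assoc, left_eq_add, ZModModule.add_eq_zero_iff_eq]
    exact hbc
  · rw [Ne, add_comm a, add_assoc, left_eq_add, ZModModule.add_eq_zero_iff_eq]
    exact hac
  · rw [Ne, right_eq_add, ZModModule.add_eq_zero_iff_eq]
    exact hab

theorem eq_and_eq_of_add_eq_add {ι : Type*} [LinearOrder ι] (hC : IsCap C)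
    {x : ι → Fin n → ZMod 2} (hx : Function.Injective x) (hxC : ∀ i, x i ∈ C)
    {i j k l : ι} (hij : i < j) (hkl : k < l) (h : x i + x j = x k + x l) : i = k ∧ j = l := by
  have hl : x l = x i + x j + x k := by
    rw [h, add_comm (x k), add_assoc, ZModModule.add_self, add_zero]
  by_cases hik : i = k
  · subst hik
    exact ⟨rfl, hx (add_left_cancel h)⟩
  by_cases hjk : j = k
  · subst hjk
    rw [add_assoc, ZModModule.add_self, add_zero] at hl
    exact absurd (hx hl ▸ hij.trans hkl) (lt_irrefl i)
  exact absurd (hl ▸ hxC l) (hC.add_add_notMem (hxC i) (hxC j) (hxC k) (hx.ne hij.ne)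
    (hx.ne hik) (hx.ne hjk))

end IsCap

theorem ncard_pairs_lt_fin_six : {p : Fin 6 × Fin 6 | p.1 < p.2}.ncard = 15 := by
  rw [← Finset.coe_filter_univ, Set.ncard_coe_finset]
  rfl

theorem Set.eq_singleton_union_pairs_of_ncard_eq {α : Type*} {S : Set α} (hS : S.ncard = 16)
    {y : α} (f : Fin 6 → Fin 6 → α) (hy : y ∈ S) (hf : ∀ i j, i < j → f i j ∈ S)
    (hfy : ∀ i j, i < j → f i j ≠ y)
    (hinj : ∀ i j k l, i < j → k < l → f i j = f k l → i = k ∧ j = l) :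
    S = {y} ∪ {p | ∃ i j, i < j ∧ p = f i j} := by
  have hT : {p | ∃ i j, i < j ∧ p = f i j} =
      (fun p : Fin 6 × Fin 6 => f p.1 p.2) '' {p | p.1 < p.2} := by
    ext p
    simp [eq_comm]
  have hinjOn : Set.InjOn (fun p : Fin 6 × Fin 6 => f p.1 p.2) {p | p.1 < p.2} := by
    rintro ⟨i, j⟩ hij ⟨k, l⟩ hkl h
    obtain ⟨rfl, rfl⟩ := hinj i j k l hij hkl h
    rfl
  have hyT : y ∉ {p | ∃ i j, i < j ∧ p = f i j} := fun ⟨i, j, hij, h⟩ =>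
    hfy i j hij h.symm
  rw [hT] at hyT ⊢
  refine (Set.eq_of_subset_of_ncard_le ?_ ?_ (Set.finite_of_ncard_ne_zero (by omega))).symm
  · rintro p (rfl | ⟨⟨i, j⟩, hij, rfl⟩)
    exacts [hy, hf i j hij]
  · rw [Set.singleton_union, Set.ncard_insert_of_notMem hyT, hinjOn.ncard_image,
      ncard_pairs_lt_fin_six, hS]

/-- Let `C` be a cap containing six points `x 0, …, x 5` lying in a 4-flat `F`, and let
`y ∈ C` lie outside `F`. If `F'` is the 4-flat parallel to `F` (same direction) containing
`y`, then `C` meets `F'` only in `y`; the 15 points `x i + x j + y` (`i < j`) are distinct,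
lie in `F'`, and together with `y` fill all of `F'`. -/
theorem six_points_in_four_flat_structure {n : ℕ} (C : Set (Fin n → ZMod 2))
    (hC : IsCap C) (x : Fin 6 → (Fin n → ZMod 2)) (hx : Function.Injective x)
    (hxC : ∀ i, x i ∈ C)
    (F F' : AffineSubspace (ZMod 2) (Fin n → ZMod 2))
    (hF : Module.finrank (ZMod 2) F.direction = 4) (hxF : ∀ i, x i ∈ F)
    (y : Fin n → ZMod 2) (hyC : y ∈ C) (hyF : y ∉ F)
    (hdir : F'.direction = F.direction) (hyF' : y ∈ F') :
    C ∩ (F' : Set (Fin n → ZMod 2)) = {y} ∧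
      (∀ i j : Fin 6, i < j → x i + x j + y ∈ F') ∧
      (∀ i j k l : Fin 6, i < j → k < l →
        x i + x j + y = x k + x l + y → i = k ∧ j = l) ∧
      (F' : Set (Fin n → ZMod 2)) =
        {y} ∪ {p | ∃ i j : Fin 6, i < j ∧ p = x i + x j + y} := by
  have hmem : ∀ i j, x i + x j + y ∈ F' := fun i j =>
    add_add_mem_of_direction_eq hdir (hxF i) (hxF j) hyF'
  have hinj : ∀ i j k l : Fin 6, i < j → k < l →
      x i + x j + y = x k + x l + y → i = k ∧ j = l :=
    fun i j k l hij hkl h => hC.eq_and_eq_of_add_eq_add hx hxC hij hkl (add_right_cancel h)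
  have hne : ∀ i j : Fin 6, i < j → x i + x j + y ≠ y := fun i j hij h =>
    hx.ne hij.ne (by rwa [add_eq_right, ZModModule.add_eq_zero_iff_eq] at h)
  have hcard : (F' : Set (Fin n → ZMod 2)).ncard = 16 := by
    have : Nonempty F' := ⟨⟨y, hyF'⟩⟩
    rw [F'.ncard_eq_natCard_pow_finrank, hdir, hF, Nat.card_zmod]
    rfl
  have hfill := Set.eq_singleton_union_pairs_of_ncard_eq hcard _ hyF' (fun i j _ => hmem i j)
    hne hinj
  refine ⟨Set.eq_singleton_iff_unique_mem.2 ⟨⟨hyC, hyF'⟩, fun z ⟨hzC, hzF'⟩ => ?_⟩,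
    fun i j _ => hmem i j, hinj, hfill⟩
  obtain rfl | ⟨i, j, hij, rfl⟩ := hfill ▸ hzF'
  · rfl
  have hxy : ∀ i, x i ≠ y := fun i h => hyF (h ▸ hxF i)
  exact absurd hzC (hC.add_add_notMem (hxC i) (hxC j) hyC (hx.ne hij.ne) (hxy i) (hxy j))
end

section
/- Let C = {x1,...,x8} be an 8-element cap in (Z/2Z)^n such that x8 = x1 + x2 + ... + x7 (so the sum of all eight elements is zero). Then every exclude point of C has multiplicity exactly 1, and consequently qc(C) has exactly 8 + C(8,3) = 64 elements. -/
open Finset symmDiff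

theorem Finset.card_symmDiff_add_two_mul_card_inter {α : Type*} [DecidableEq α]
    (s t : Finset α) : #(s ∆ t) + 2 * #(s ∩ t) = #s + #t := by
  rw [symmDiff_eq_sup_sdiff_inf, sup_eq_union, inf_eq_inter,
    card_sdiff_of_subset inter_subset_union, ← card_union_add_card_inter]
  have := card_le_card (inter_subset_union (s := s) (t := t))
  omega

section ZModTwo

variable {G : Type*} [AddCommGroup G] [Module (ZMod 2) G]

theorem Finset.sum_symmDiff {ι : Type*} [DecidableEq ι] (s t : Finset ι) (f : ι → G) :
    ∑ i ∈ s ∆ t, f i = ∑ i ∈ s, f i + ∑ i ∈ t, f i := by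
  rw [← sum_union_inter, ← sum_sdiff (inter_subset_union (s := s) (t := t)),
    symmDiff_eq_sup_sdiff_inf, add_assoc, ZModModule.add_self, add_zero]
  rfl

theorem sum_ne_zero_of_card_eq_two_s17 [DecidableEq G] {u : Finset G} (hu : #u = 2) :
    u.sum id ≠ 0 := by
  obtain ⟨a, b, hab, rfl⟩ := card_eq_two.mp hu
  rw [sum_pair hab, id, id, ← ZModModule.sub_eq_add]
  exact sub_ne_zero.mpr hab

theorem sum_ne_zero_of_card_eq_add_two [DecidableEq G] {S u : Finset G} (hsum : S.sum id = 0)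
    (hu : u ⊆ S) (hcard : #S = #u + 2) : u.sum id ≠ 0 := by
  intro hzero
  have hrest : (S \ u).sum id = 0 := by
    simpa only [hzero, add_zero, hsum] using sum_sdiff hu (f := id)
  exact sum_ne_zero_of_card_eq_two_s17 (by rw [card_sdiff_of_subset hu, hcard]; omega) hrest

end ZModTwo

namespace IsCap

variable {n : ℕ} {S u : Finset (Fin n → ZMod 2)}

theorem sum_ne_zero_of_card_eq_four_s17 (hS : IsCap (S : Set (Fin n → ZMod 2))) (hu : u ⊆ S)
    (h4 : #u = 4) : u.sum id ≠ 0 := by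
  obtain ⟨a, v, hav, rfl, hv⟩ := card_eq_succ.mp h4
  obtain ⟨b, c, d, hbc, hbd, hcd, rfl⟩ := card_eq_three.mp hv
  simp only [mem_insert, mem_singleton, not_or] at hav
  obtain ⟨hab, hac, had⟩ := hav
  rw [sum_insert (by simp [hab, hac, had]), sum_insert (by simp [hbc, hbd]), sum_pair hcd]
  simp only [insert_subset_iff, singleton_subset_iff] at hu
  simpa only [id, add_assoc] using
    hS a hu.1 b hu.2.1 c hu.2.2.1 d hu.2.2.2 hab hac had hbc hbd hcd

theorem disjoint_excl (hS : IsCap (S : Set (Fin n → ZMod 2))) : Disjoint S (excl S) := by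
  refine disjoint_left.mpr fun p hp hpe => ?_
  obtain ⟨t, ht, rfl⟩ := mem_image.mp hpe
  obtain ⟨htS, ht3⟩ := mem_powersetCard.mp ht
  have hsub : t ∆ {t.sum id} ⊆ S :=
    symmDiff_le_sup.trans (union_subset htS (singleton_subset_iff.mpr hp))
  have hzero : (t ∆ {t.sum id}).sum id = 0 := by
    rw [sum_symmDiff, sum_singleton, id, ZModModule.add_self]
  have hcard := card_symmDiff_add_two_mul_card_inter t {t.sum id}
  have hinter : #(t ∩ {t.sum id}) ≤ 1 :=
    (card_le_card inter_subset_right).trans_eq (card_singleton _)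
  rw [ht3, card_singleton] at hcard
  rcases (by omega : #(t ∆ {t.sum id}) = 2 ∨ #(t ∆ {t.sum id}) = 4) with h | h
  · exact sum_ne_zero_of_card_eq_two_s17 h hzero
  · exact hS.sum_ne_zero_of_card_eq_four_s17 hsub h hzero

theorem injOn_sum_powersetCard_three_s17 (hS : IsCap (S : Set (Fin n → ZMod 2))) (hcard : #S = 8)
    (hsum : S.sum id = 0) :
    Set.InjOn (fun t : Finset (Fin n → ZMod 2) => t.sum id) (S.powersetCard 3 : Set _) := by
  intro t ht s hs hts
  obtain ⟨htS, ht3⟩ := mem_powersetCard.mp ht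
  obtain ⟨hsS, hs3⟩ := mem_powersetCard.mp hs
  by_contra hne
  have hsub : t ∆ s ⊆ S := symmDiff_le_sup.trans (union_subset htS hsS)
  have hzero : (t ∆ s).sum id = 0 := by
    change t.sum id = s.sum id at hts
    rw [sum_symmDiff, ← ZModModule.add_self (s.sum id)]
    exact congrArg (· + s.sum id) hts
  have hpos : 0 < #(t ∆ s) := card_pos.mpr (symmDiff_nonempty.mpr hne)
  have hsymm := card_symmDiff_add_two_mul_card_inter t s
  rw [ht3, hs3] at hsymm
  rcases (by omega : #(t ∆ s) = 2 ∨ #(t ∆ s) = 4 ∨ #(t ∆ s) = 6) with h | h | h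
  · exact sum_ne_zero_of_card_eq_two_s17 h hzero
  · exact hS.sum_ne_zero_of_card_eq_four_s17 hsub h hzero
  · exact sum_ne_zero_of_card_eq_add_two hsum hsub (by omega) hzero

end IsCap

section Exclude

variable {n : ℕ} {S : Finset (Fin n → ZMod 2)}

theorem mult_eq_one_of_injOn
    (hinj : Set.InjOn (fun t : Finset (Fin n → ZMod 2) => t.sum id) (S.powersetCard 3 : Set _))
    {p : Fin n → ZMod 2} (hp : p ∈ excl S) : mult S p = 1 := by
  obtain ⟨t, ht, rfl⟩ := mem_image.mp hp
  refine card_eq_one.mpr ⟨t, eq_singleton_iff_unique_mem.mpr ⟨mem_filter.mpr ⟨ht, rfl⟩, ?_⟩⟩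
  intro s hs
  obtain ⟨hs, hsum⟩ := mem_filter.mp hs
  exact hinj hs ht hsum

theorem card_excl_of_injOn
    (hinj : Set.InjOn (fun t : Finset (Fin n → ZMod 2) => t.sum id) (S.powersetCard 3 : Set _)) :
    #(excl S) = (#S).choose 3 := by
  rw [excl, card_image_of_injOn hinj, card_powersetCard]

end Exclude

/-- Let `C` be an 8-element cap containing an element `x₈` equal to the sum of the other
seven elements (so the sum of all eight elements is zero). Then every exclude point of
`C` has multiplicity exactly 1, and `qc(C) = C ∪ exc(C)` has `8 + C(8,3) = 64` elements. -/
theorem eight_cap_sum_zero {n : ℕ} (C : Finset (Fin n → ZMod 2))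
    (hC : IsCap (C : Set (Fin n → ZMod 2))) (hcard : C.card = 8)
    (x₈ : Fin n → ZMod 2) (hx₈ : x₈ ∈ C) (hsum : x₈ = (C.erase x₈).sum id) :
    (∀ p ∈ excl C, mult C p = 1) ∧ (C ∪ excl C).card = 64 := by
  have hCsum : C.sum id = 0 := by
    rw [← sum_erase_add C id hx₈, ← hsum]
    exact ZModModule.add_self x₈
  have hinj := hC.injOn_sum_powersetCard_three_s17 hcard hCsum
  refine ⟨fun p hp => mult_eq_one_of_injOn hinj hp, ?_⟩
  rw [card_union_of_disjoint hC.disjoint_excl, card_excl_of_injOn hinj, hcard]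
  rfl
end
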